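/- If B = S Wᵀ with S ∈ {±1}^{n×r} Schur independent and W ∈ R^{m×r} of full column rank, then rank(B) = r, and consequently any sign component decomposition of B has inner dimension at least r. -/

import Mathlib

/-!
If `∑ k, c k • s k = 0`, squaring entrywise and using `s k ⊙ s k = 1` gives the relation
`(∑ k, c k ^ 2) • 1 + ∑_{k < l} 2 c k c l • (s k ⊙ s l) = 0`, so Schur independence forces
`∑ k, c k ^ 2 = 0`. Hence `S` has independent columns, left multiplication by `S` preserves rank,
and `rank (S * Wᵀ) = rank W = r`, while a factorization through `r'` columns has rank at most `r'`.
-/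

open Matrix

/-- Schur independence of a family of sign vectors. -/
def SchurIndep {n r : ℕ} (s : Fin r → (Fin n → ℝ)) : Prop :=
  LinearIndependent ℝ (fun p : Option {p : Fin r × Fin r // p.1 < p.2} =>
    p.elim (fun _ => (1 : ℝ)) (fun q => s q.1.1 * s q.1.2))

theorem Fintype.sq_sum_eq_sum_sq_add_two_mul_sum_lt {ι R : Type*} [Fintype ι] [LinearOrder ι]
    [CommSemiring R] (a : ι → R) :
    (∑ i, a i) ^ 2 = ∑ i, a i ^ 2 + 2 * ∑ p : {p : ι × ι // p.1 < p.2}, a p.1.1 * a p.1.2 := by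
  have hlt : ∑ i, ∑ j, (if i < j then a i * a j else 0) =
      ∑ p : {p : ι × ι // p.1 < p.2}, a p.1.1 * a p.1.2 := by
    rw [← Fintype.sum_prod_type', ← Finset.sum_filter, Finset.sum_subtype]
    simp
  have hgt : ∑ i, ∑ j, (if j < i then a i * a j else 0) =
      ∑ i, ∑ j, (if i < j then a i * a j else 0) := by
    rw [Finset.sum_comm]
    simp only [mul_comm]
  calc (∑ i, a i) ^ 2 = ∑ i, ∑ j, a i * a j := by rw [sq, Finset.sum_mul_sum]
    _ = ∑ i, ∑ j, ((if i < j then a i * a j else 0) + (if i = j then a i * a j else 0) +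
          (if j < i then a i * a j else 0)) := by
        refine Fintype.sum_congr _ _ fun i => Fintype.sum_congr _ _ fun j => ?_
        rcases lt_trichotomy i j with h | rfl | h
        · simp [h, h.ne, h.not_gt]
        · simp
        · simp [h, h.ne', h.not_gt]
    _ = _ := by
        simp only [Finset.sum_add_distrib, hgt, hlt, Finset.sum_ite_eq, Finset.mem_univ, if_true]
        simp only [sq]; ring

theorem SchurIndep.linearIndependent {n r : ℕ} {s : Fin r → Fin n → ℝ}
    (hs : ∀ j i, s j i ^ 2 = 1) (h : SchurIndep s) : LinearIndependent ℝ s := by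
  rw [Fintype.linearIndependent_iff]
  intro c hc
  have hsum_sq := Fintype.linearIndependent_iff.mp h
    (Option.elim · (∑ k, c k ^ 2) fun q => 2 * (c q.1.1 * c q.1.2)) ?_ none
  · have := (Finset.sum_eq_zero_iff_of_nonneg fun k _ => sq_nonneg (c k)).mp hsum_sq
    exact fun k => pow_eq_zero_iff two_ne_zero |>.mp (this k (Finset.mem_univ k))
  funext i
  have hsq := Fintype.sq_sum_eq_sum_sq_add_two_mul_sum_lt fun k => c k * s k i
  have hci : ∑ k, c k * s k i = 0 := by simpa using congr_fun hc i
  simp only [mul_pow, hs, mul_one, hci, Finset.mul_sum] at hsq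
  simp only [Finset.sum_apply, Pi.smul_apply, smul_eq_mul, Fintype.sum_option, Option.elim,
    Pi.zero_apply, Pi.mul_apply, mul_one]
  refine Eq.trans ?_ (hsq.symm.trans (zero_pow two_ne_zero))
  exact congrArg _ (Fintype.sum_congr _ _ fun q => by ring)

theorem Matrix.rank_mul_eq_right_of_mulVec_injective {m n o R : Type*} [Fintype n] [Fintype o]
    [CommRing R] {A : Matrix m n R} (B : Matrix n o R) (hA : Function.Injective A.mulVec) :
    (A * B).rank = B.rank := by
  rw [rank, rank, mulVecLin_mul, LinearMap.range_comp,
    ← (Submodule.equivMapOfInjective A.mulVecLin hA _).finrank_eq]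

/-- If `B = S Wᵀ` with `S` Schur independent and `W` of full column rank,
then `rank B = r` and every sign component decomposition of `B` has inner dimension
at least `r`. -/
theorem rank_of_sign_component_decomposition {n m r : ℕ}
    (S : Matrix (Fin n) (Fin r) ℝ) (W : Matrix (Fin m) (Fin r) ℝ)
    (hS : ∀ i j, S i j = 1 ∨ S i j = -1)
    (hSchur : SchurIndep (fun j i => S i j))
    (hW : W.rank = r) :
    (S * Wᵀ).rank = r ∧
      ∀ (r' : ℕ) (S' : Matrix (Fin n) (Fin r') ℝ) (W' : Matrix (Fin m) (Fin r') ℝ),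
        (∀ i j, S' i j = 1 ∨ S' i j = -1) → S * Wᵀ = S' * W'ᵀ → r ≤ r' := by
  have hsq : ∀ j i, S i j ^ 2 = 1 := fun j i => by rcases hS i j with h | h <;> simp [h]
  have hinj : Function.Injective S.mulVec :=
    mulVec_injective_iff.mpr (hSchur.linearIndependent hsq)
  have hrank : (S * Wᵀ).rank = r := by
    rw [rank_mul_eq_right_of_mulVec_injective _ hinj, rank_transpose, hW]
  refine ⟨hrank, fun r' S' W' _ hB => ?_⟩
  calc r = (S' * W'ᵀ).rank := by rw [← hB, hrank]
    _ ≤ S'.rank := rank_mul_le_left _ _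
    _ ≤ r' := by simpa using rank_le_width S'
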